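/- Let f: ℝ^p → ℝ be L_f-smooth, g: ℝ^p → ℝ ∪ {∞} proper, convex and lsc, and 0 < γ < 1/L_f. Writing h = −f, the DC envelope φ_γ = g^γ − h^γ and the forward-backward envelope φ_γ^FB satisfy φ_γ^FB(u) = φ_γ(u − γ∇f(u)) for every u ∈ ℝ^p, and φ_γ(s) = φ_γ^FB(prox_{−γf}(s)) for every s ∈ ℝ^p. -/

import Mathlib

open scoped InnerProductSpace
noncomputable section

/-- `ℝ^p` as a Euclidean space. -/
abbrev Euc (p : ℕ) := EuclideanSpace ℝ (Fin p)

variable {p : ℕ}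

/-- `f : ℝ^p → ℝ ∪ {∞}` (modelled with `EReal` values never equal to `-∞`) is proper. -/
def ProperFun (f : Euc p → EReal) : Prop :=
  (∀ x, f x ≠ ⊥) ∧ (∃ x, f x ≠ ⊤)

/-- Convexity for extended-real-valued functions. -/
def ConvexFun (f : Euc p → EReal) : Prop :=
  ∀ x y : Euc p, ∀ t : ℝ, 0 ≤ t → t ≤ 1 →
    f (t • x + (1 - t) • y) ≤ (t : EReal) * f x + ((1 - t : ℝ) : EReal) * f y

/-- The Moreau envelope `f^γ(x) = inf_w { f(w) + (1/(2γ))‖w − x‖² }`, as an extended real. -/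
def moreau (f : Euc p → EReal) (γ : ℝ) (x : Euc p) : EReal :=
  ⨅ w : Euc p, f w + ((1/(2*γ) * ‖w - x‖^2 : ℝ) : EReal)

/-- The (real-valued) Moreau envelope. -/
def moreauR (f : Euc p → EReal) (γ : ℝ) (x : Euc p) : ℝ := (moreau f γ x).toReal

/-- `u` minimizes `w ↦ −f(w) + (1/(2γ))‖w − s‖²` (for real-valued `f`). -/
def NegProxObjMin (f : Euc p → ℝ) (γ : ℝ) (s u : Euc p) : Prop :=
  ∀ w, -f u + 1/(2*γ) * ‖u - s‖^2 ≤ -f w + 1/(2*γ) * ‖w - s‖^2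

/-!
For `s = u - γ∇f(u)` the infimum defining `(-f)^γ(s)` is attained at `u`: by the descent lemma
`-f(w) + ‖w - s‖²/(2γ)` exceeds its value at `u` by at least `(1/γ - L_f)‖w - u‖²/2 ≥ 0`.
Conversely the first-order condition forces every minimizer `u = prox_{-γf}(s)` to satisfy
`s = u - γ∇f(u)`. At such a pair `(-f)^γ(s) = -f(u) + (γ/2)‖∇f(u)‖²`, and both identities follow
by substitution, the term `g^γ(u - γ∇f(u)) = g^γ(s)` being common to both sides.
-/

open InnerProductSpace

section Smooth

variable {E : Type*} [NormedAddCommGroup E] [InnerProductSpace ℝ E] [CompleteSpace E]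
  {f : E → ℝ} {f' : E → E}

theorem hasDerivAt_comp_line_of_hasGradientAt (hf : ∀ x, HasGradientAt f (f' x) x)
    (u v : E) (t : ℝ) :
    HasDerivAt (fun t : ℝ => f (u + t • v)) ⟪f' (u + t • v), v⟫_ℝ t := by
  have hline : HasDerivAt (fun t : ℝ => u + t • v) v t := by
    simpa using ((hasDerivAt_id t).smul_const v).const_add u
  have := (hf (u + t • v)).hasFDerivAt.comp_hasDerivAt t hline
  simp only [toDual_apply_apply] at this
  exact this

theorem le_add_inner_add_of_lipschitzWith_gradient (hf : ∀ x, HasGradientAt f (f' x) x)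
    {K : NNReal} (hlip : LipschitzWith K f') (u w : E) :
    f w ≤ f u + ⟪f' u, w - u⟫_ℝ + K / 2 * ‖w - u‖ ^ 2 := by
  set v := w - u
  set ψ : ℝ → ℝ := fun t => f (u + t • v) - ⟪f' u, v⟫_ℝ * t - K / 2 * ‖v‖ ^ 2 * t ^ 2
  have hψ : ∀ t, HasDerivAt ψ
      (⟪f' (u + t • v), v⟫_ℝ - ⟪f' u, v⟫_ℝ * 1 - K / 2 * ‖v‖ ^ 2 * (↑2 * t ^ 1)) t := fun t =>
    ((hasDerivAt_comp_line_of_hasGradientAt hf u v t).sub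
      ((hasDerivAt_id t).const_mul _)).sub ((hasDerivAt_pow 2 t).const_mul _)
  have hψ_nonpos : ∀ t, 0 ≤ t →
      ⟪f' (u + t • v), v⟫_ℝ - ⟪f' u, v⟫_ℝ * 1 - K / 2 * ‖v‖ ^ 2 * (↑2 * t ^ 1) ≤ 0 := by
    intro t ht
    have hgrad : ‖f' (u + t • v) - f' u‖ ≤ K * (t * ‖v‖) := by
      simpa [← dist_eq_norm, norm_smul, abs_of_nonneg ht] using hlip.dist_le_mul (u + t • v) u
    have := (real_inner_le_norm (f' (u + t • v) - f' u) v).trans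
      (mul_le_mul_of_nonneg_right hgrad (norm_nonneg v))
    rw [inner_sub_left] at this
    linarith
  have hanti : AntitoneOn ψ (Set.Icc 0 1) :=
    antitoneOn_of_hasDerivWithinAt_nonpos (convex_Icc 0 1)
      (fun t _ => (hψ t).continuousAt.continuousWithinAt) (fun t _ => (hψ t).hasDerivWithinAt)
      (fun t ht => hψ_nonpos t (interior_subset ht).1)
  have h01 := hanti (Set.left_mem_Icc.2 zero_le_one) (Set.right_mem_Icc.2 zero_le_one) zero_le_one
  simp only [ψ, v, zero_smul, add_zero, one_smul, add_sub_cancel] at h01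
  linarith

theorem sub_eq_smul_of_isLocalMin_neg_add_sq {γ : ℝ} (hγ : γ ≠ 0) {s u : E}
    (hf : HasGradientAt f (f' u) u)
    (hmin : IsLocalMin (fun w => -f w + 1 / (2 * γ) * ‖w - s‖ ^ 2) u) :
    u - s = γ • f' u := by
  have hΦ := hf.hasFDerivAt.neg.add
    (((hasFDerivAt_id u).sub_const s).norm_sq.const_mul (1 / (2 * γ)))
  have hzero := hmin.hasFDerivAt_eq_zero hΦ
  have hortho : ∀ e, ⟪γ⁻¹ • (u - s) - f' u, e⟫_ℝ = 0 := fun e => by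
    have := congrArg (fun L => L e) hzero
    simp only [one_div, mul_inv_rev, id_eq, map_sub, ContinuousLinearMap.comp_id, add_apply,
      neg_apply, toDual_apply_apply, smul_apply, sub_apply, coe_innerSL_apply, nsmul_eq_mul,
      Nat.cast_ofNat, smul_eq_mul, zero_apply] at this
    rw [inner_sub_left, real_inner_smul_left, inner_sub_left]
    linarith
  have hgrad := hortho (γ⁻¹ • (u - s) - f' u)
  rw [inner_self_eq_zero, sub_eq_zero] at hgrad
  rw [← hgrad, smul_inv_smul₀ hγ]

end Smooth

section Envelope

variable {f : Euc p → ℝ} {f' : Euc p → Euc p} {γ : ℝ} {s u : Euc p}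

theorem moreauR_coe_eq_of_forall_le (φ : Euc p → ℝ)
    (hmin : ∀ w, φ u + 1 / (2 * γ) * ‖u - s‖ ^ 2 ≤ φ w + 1 / (2 * γ) * ‖w - s‖ ^ 2) :
    moreauR (fun x => (φ x : EReal)) γ s = φ u + 1 / (2 * γ) * ‖u - s‖ ^ 2 := by
  have hinf : moreau (fun x => (φ x : EReal)) γ s
      = ((φ u + 1 / (2 * γ) * ‖u - s‖ ^ 2 : ℝ) : EReal) := by
    simp only [moreau, ← EReal.coe_add]
    exact le_antisymm (iInf_le _ u) (le_iInf fun w => EReal.coe_le_coe_iff.2 (hmin w))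
  rw [moreauR, hinf, EReal.toReal_coe]

theorem negProxObjMin_of_sub_eq_smul (hf : ∀ x, HasGradientAt f (f' x) x) {K : NNReal}
    (hlip : LipschitzWith K f') (hγ : 0 < γ) (hγK : γ * K ≤ 1) (hus : u - s = γ • f' u) :
    NegProxObjMin f γ s u := by
  intro w
  have hdescent := le_add_inner_add_of_lipschitzWith_gradient hf hlip u w
  have hK : K / 2 * ‖w - u‖ ^ 2 ≤ 1 / (2 * γ) * ‖w - u‖ ^ 2 := by
    refine mul_le_mul_of_nonneg_right ?_ (sq_nonneg _)
    rw [div_le_div_iff₀ two_pos (by positivity)]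
    linarith
  have hws : w - s = (w - u) + γ • f' u := by rw [← hus]; abel
  have hexpand : 1 / (2 * γ) * ‖w - s‖ ^ 2
      = 1 / (2 * γ) * ‖w - u‖ ^ 2 + ⟪f' u, w - u⟫_ℝ + 1 / (2 * γ) * ‖u - s‖ ^ 2 := by
    rw [hws, hus, norm_add_sq_real, real_inner_smul_right, real_inner_comm]
    field_simp
  linarith

theorem moreauR_neg_eq_of_sub_eq_smul (hγ : 0 < γ) (hmin : NegProxObjMin f γ s u)
    (hus : u - s = γ • f' u) :
    moreauR (fun x => ((-f x : ℝ) : EReal)) γ s = -f u + γ / 2 * ‖f' u‖ ^ 2 := by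
  rw [moreauR_coe_eq_of_forall_le (fun x => -f x) hmin, hus, norm_smul, Real.norm_of_nonneg hγ.le]
  field_simp

end Envelope

theorem statement9_general
    (f : Euc p → ℝ) (f' : Euc p → Euc p)
    (hf : ∀ x, HasGradientAt f (f' x) x)
    (Lf : ℝ) (hlip : LipschitzWith (Real.toNNReal Lf) f')
    (g : Euc p → EReal)
    (γ : ℝ) (hγ : 0 < γ) (hγL : γ * Lf < 1)
    (proxnf : Euc p → Euc p)
    (hproxnf : ∀ s, NegProxObjMin f γ s (proxnf s) ∧
      ∀ w, NegProxObjMin f γ s w → w = proxnf s) :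
    (∀ u : Euc p,
        f u - γ/2 * ‖f' u‖^2 + moreauR g γ (u - γ • f' u) =
          moreauR g γ (u - γ • f' u)
            - moreauR (fun x => ((-f x : ℝ) : EReal)) γ (u - γ • f' u)) ∧
      (∀ s : Euc p,
        moreauR g γ s - moreauR (fun x => ((-f x : ℝ) : EReal)) γ s =
          f (proxnf s) - γ/2 * ‖f' (proxnf s)‖^2
            + moreauR g γ (proxnf s - γ • f' (proxnf s))) := by
  have hγK : γ * (Real.toNNReal Lf : ℝ) ≤ 1 := by
    rw [Real.coe_toNNReal', mul_max_of_nonneg _ _ hγ.le, mul_zero]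
    exact max_le hγL.le zero_le_one
  constructor
  · intro u
    have hus : u - (u - γ • f' u) = γ • f' u := sub_sub_cancel u _
    rw [moreauR_neg_eq_of_sub_eq_smul hγ (negProxObjMin_of_sub_eq_smul hf hlip hγ hγK hus) hus]
    ring
  · intro s
    have hmin := (hproxnf s).1
    have hus : proxnf s - s = γ • f' (proxnf s) :=
      sub_eq_smul_of_isLocalMin_neg_add_sq hγ.ne' (hf _) (Filter.Eventually.of_forall hmin)
    rw [moreauR_neg_eq_of_sub_eq_smul hγ hmin hus, ← hus, sub_sub_cancel]
    ring

/-- for `L_f`-smooth `f`, proper convex lsc `g` and `0 < γ < 1/L_f`, writing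
`h = −f`, the DC envelope `φ_γ = g^γ − h^γ` and the forward-backward envelope
`φ_γ^FB(u) = f(u) − (γ/2)‖∇f(u)‖² + g^γ(u − γ∇f(u))` satisfy
`φ_γ^FB = φ_γ ∘ (id − γ∇f)` and `φ_γ = φ_γ^FB ∘ prox_{−γf}`. -/
theorem statement9
    (f : Euc p → ℝ) (f' : Euc p → Euc p)
    (hf : ∀ x, HasGradientAt f (f' x) x)
    (Lf : ℝ) (hLf : 0 ≤ Lf) (hlip : LipschitzWith (Real.toNNReal Lf) f')
    (g : Euc p → EReal)
    (hg_proper : ProperFun g) (hg_convex : ConvexFun g) (hg_lsc : LowerSemicontinuous g)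
    (γ : ℝ) (hγ : 0 < γ) (hγL : γ * Lf < 1)
    (proxnf : Euc p → Euc p)
    (hproxnf : ∀ s, NegProxObjMin f γ s (proxnf s) ∧
      ∀ w, NegProxObjMin f γ s w → w = proxnf s) :
    (∀ u : Euc p,
        f u - γ/2 * ‖f' u‖^2 + moreauR g γ (u - γ • f' u) =
          moreauR g γ (u - γ • f' u)
            - moreauR (fun x => ((-f x : ℝ) : EReal)) γ (u - γ • f' u)) ∧
      (∀ s : Euc p,
        moreauR g γ s - moreauR (fun x => ((-f x : ℝ) : EReal)) γ s =
          f (proxnf s) - γ/2 * ‖f' (proxnf s)‖^2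
            + moreauR g γ (proxnf s - γ • f' (proxnf s))) :=
  statement9_general f f' hf Lf hlip g γ hγ hγL proxnf hproxnf
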